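/- Let G = (A;E) be C²_ω, the countably infinite graph that is a disjoint union of ω edges, let h : A³ → A be an operation such that (i) N(h(a),h(b)) whenever N(a[i],b[i]) for some i, and (ii) whenever (a[i],b[i]) ∈ E ∪ = for all i, E(h(a),h(b)) iff the number of coordinates with E(a[i],b[i]) is odd, and let f : A^k → A be a quasi near-unanimity operation preserving E, N and uuE. If a quaternary relation R ⊆ A⁴ is preserved by both h and f, is invariant under all automorphisms of G, and contains an EE-tuple t and an ==-tuple t′ with N(t[2],t[3]) and N(t′[2],t′[3]), then R contains an E=-tuple and an =E-tuple. -/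
import Mathlib


universe u

variable {A : Type u}

/-- Non-adjacency relation `N` of a graph with edge relation `E`. -/
def NRel (E : A → A → Prop) (a b : A) : Prop := a ≠ b ∧ ¬ E a b

/-- `uu O` denotes `O ∪ =`. -/
def uu (O : A → A → Prop) (a b : A) : Prop := O a b ∨ a = b

/-- `E` is the edge relation of a simple graph: symmetric and irreflexive. -/
def IsSimpleGraph (E : A → A → Prop) : Prop :=
  (∀ a b, E a b → E b a) ∧ (∀ a, ¬ E a a)

/-- An `n`-ary operation preserves an `m`-ary relation. -/
def Preserves {n m : ℕ} (f : (Fin n → A) → A) (R : Set (Fin m → A)) : Prop :=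
  ∀ t : Fin n → (Fin m → A), (∀ i, t i ∈ R) → (fun j => f (fun i => t i j)) ∈ R

/-- An `n`-ary operation preserves a binary relation `S`. -/
def PreservesRel {n : ℕ} (f : (Fin n → A) → A) (S : A → A → Prop) : Prop :=
  ∀ u v : Fin n → A, (∀ i, S (u i) (v i)) → S (f u) (f v)

/-- A binary (curried) operation preserves an `m`-ary relation. -/
def Preserves2 {m : ℕ} (f : A → A → A) (R : Set (Fin m → A)) : Prop :=
  ∀ t₁ t₂, t₁ ∈ R → t₂ ∈ R → (fun j => f (t₁ j) (t₂ j)) ∈ R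

/-- A ternary (curried) operation preserves an `m`-ary relation. -/
def Preserves3 {m : ℕ} (f : A → A → A → A) (R : Set (Fin m → A)) : Prop :=
  ∀ t₁ t₂ t₃, t₁ ∈ R → t₂ ∈ R → t₃ ∈ R → (fun j => f (t₁ j) (t₂ j) (t₃ j)) ∈ R

/-- `t` is an `OP`-tuple: `(t[1],t[2]) ∈ O` and `(t[3],t[4]) ∈ P`. -/
def IsOP (O P : A → A → Prop) (t : Fin 4 → A) : Prop := O (t 0) (t 1) ∧ P (t 2) (t 3)

/-- A quaternary relation entails a formula `ψ(x₁,x₂,x₃,x₄)`. -/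
def Entails (R : Set (Fin 4 → A)) (ψ : A → A → A → A → Prop) : Prop :=
  ∀ t ∈ R, ψ (t 0) (t 1) (t 2) (t 3)

/-- `R` efficiently entails `S₁(x₁,x₂) → S₂(x₃,x₄)`. -/
def EffEntails (R : Set (Fin 4 → A)) (S₁ S₂ : A → A → Prop) : Prop :=
  (∀ t ∈ R, S₁ (t 0) (t 1) → S₂ (t 2) (t 3)) ∧
  (∃ t ∈ R, S₁ (t 0) (t 1) ∧ S₂ (t 2) (t 3)) ∧
  (∃ t ∈ R, ¬ S₁ (t 0) (t 1) ∧ ¬ S₂ (t 2) (t 3))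

/-- `f` is a quasi near-unanimity operation. -/
def IsQnu {k : ℕ} (f : (Fin k → A) → A) : Prop :=
  ∀ x y : A, ∀ j : Fin k, f (Function.update (fun _ => x) j y) = f (fun _ => x)

/-- `α` is an automorphism of the graph `(A;E)`. -/
def IsGraphAuto (E : A → A → Prop) (α : A ≃ A) : Prop := ∀ a b, E (α a) (α b) ↔ E a b

/-- `R` is invariant under all automorphisms of `(A;E)`. -/
def AutoInvariant {m : ℕ} (E : A → A → Prop) (R : Set (Fin m → A)) : Prop :=
  ∀ α : A ≃ A, IsGraphAuto E α → ∀ t ∈ R, (fun i => α (t i)) ∈ R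

/-- The extension property of the random graph. -/
def ExtensionProperty (E : A → A → Prop) : Prop :=
  ∀ U U' : Finset A, Disjoint U U' →
    ∃ v : A, (∀ u ∈ U, E v u) ∧ (∀ u ∈ U', ¬ E v u)

/-- A binary operation is injective. -/
def BinInj (f : A → A → A) : Prop := Function.Injective (fun p : A × A => f p.1 p.2)

/-- A ternary operation is injective. -/
def TernInj (f : A → A → A → A) : Prop :=
  Function.Injective (fun p : A × A × A => f p.1 p.2.1 p.2.2)

/-- A binary injection is balanced. -/
def BalancedBin (E : A → A → Prop) (f : A → A → A) : Prop :=
  ∀ a₁ a₂ b₁ b₂ : A,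
    (((E a₁ b₁ ∧ a₂ = b₂) ∨ (a₁ = b₁ ∧ E a₂ b₂)) → E (f a₁ a₂) (f b₁ b₂)) ∧
    (((NRel E a₁ b₁ ∧ a₂ = b₂) ∨ (a₁ = b₁ ∧ NRel E a₂ b₂)) → NRel E (f a₁ a₂) (f b₁ b₂))

/-- A binary operation is `E`-dominated. -/
def EDominated (E : A → A → Prop) (f : A → A → A) : Prop :=
  ∀ a₁ a₂ b₁ b₂ : A, ((a₁ = b₁ ∧ a₂ ≠ b₂) ∨ (a₁ ≠ b₁ ∧ a₂ = b₂)) → E (f a₁ a₂) (f b₁ b₂)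

/-- A binary operation is `N`-dominated. -/
def NDominated (E : A → A → Prop) (f : A → A → A) : Prop :=
  ∀ a₁ a₂ b₁ b₂ : A, ((a₁ = b₁ ∧ a₂ ≠ b₂) ∨ (a₁ ≠ b₁ ∧ a₂ = b₂)) → NRel E (f a₁ a₂) (f b₁ b₂)

/-- A binary operation is of behaviour min. -/
def BehMin (E : A → A → Prop) (f : A → A → A) : Prop :=
  ∀ a₁ a₂ b₁ b₂ : A, a₁ ≠ b₁ → a₂ ≠ b₂ →
    (E (f a₁ a₂) (f b₁ b₂) ↔ (E a₁ b₁ ∧ E a₂ b₂))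

/-- A binary operation is of behaviour max. -/
def BehMax (E : A → A → Prop) (f : A → A → A) : Prop :=
  ∀ a₁ a₂ b₁ b₂ : A, a₁ ≠ b₁ → a₂ ≠ b₂ →
    (NRel E (f a₁ a₂) (f b₁ b₂) ↔ (NRel E a₁ b₁ ∧ NRel E a₂ b₂))

/-- A binary operation is of behaviour projection. -/
def BehProj (E : A → A → Prop) (f : A → A → A) : Prop :=
  (∀ a₁ a₂ b₁ b₂ : A, a₁ ≠ b₁ → a₂ ≠ b₂ → (E (f a₁ a₂) (f b₁ b₂) ↔ E a₁ b₁)) ∨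
  (∀ a₁ a₂ b₁ b₂ : A, a₁ ≠ b₁ → a₂ ≠ b₂ → (E (f a₁ a₂) (f b₁ b₂) ↔ E a₂ b₂))

/-- A binary operation is of behaviour xor. -/
def BehXor (E : A → A → Prop) (f : A → A → A) : Prop :=
  ∀ a₁ a₂ b₁ b₂ : A, a₁ ≠ b₁ → a₂ ≠ b₂ →
    (E (f a₁ a₂) (f b₁ b₂) ↔ Xor' (E a₁ b₁) (E a₂ b₂))

/-- A binary operation is of behaviour xnor. -/
def BehXnor (E : A → A → Prop) (f : A → A → A) : Prop :=
  ∀ a₁ a₂ b₁ b₂ : A, a₁ ≠ b₁ → a₂ ≠ b₂ →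
    (E (f a₁ a₂) (f b₁ b₂) ↔ (E a₁ b₁ ↔ E a₂ b₂))

/-- A binary operation is `E`-constant: its image induces a clique. -/
def EConstantBin (E : A → A → Prop) (f : A → A → A) : Prop :=
  ∀ a₁ a₂ b₁ b₂ : A, f a₁ a₂ ≠ f b₁ b₂ → E (f a₁ a₂) (f b₁ b₂)

/-- A binary operation is `N`-constant: its image induces an independent set. -/
def NConstantBin (E : A → A → Prop) (f : A → A → A) : Prop :=
  ∀ a₁ a₂ b₁ b₂ : A, f a₁ a₂ ≠ f b₁ b₂ → NRel E (f a₁ a₂) (f b₁ b₂)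

/-- A ternary operation is of behaviour majority. -/
def BehMajority (E : A → A → Prop) (f : A → A → A → A) : Prop :=
  ∀ a₁ a₂ a₃ b₁ b₂ b₃ : A, a₁ ≠ b₁ → a₂ ≠ b₂ → a₃ ≠ b₃ →
    (E (f a₁ a₂ a₃) (f b₁ b₂ b₃) ↔
      ((E a₁ b₁ ∧ E a₂ b₂) ∨ (E a₁ b₁ ∧ E a₃ b₃) ∨ (E a₂ b₂ ∧ E a₃ b₃)))

/-- A ternary operation is of behaviour minority. -/
def BehMinority (E : A → A → Prop) (f : A → A → A → A) : Prop :=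
  ∀ a₁ a₂ a₃ b₁ b₂ b₃ : A, a₁ ≠ b₁ → a₂ ≠ b₂ → a₃ ≠ b₃ →
    (NRel E (f a₁ a₂ a₃) (f b₁ b₂ b₃) ↔
      ((NRel E a₁ b₁ ∧ NRel E a₂ b₂ ∧ NRel E a₃ b₃) ∨
       (E a₁ b₁ ∧ E a₂ b₂ ∧ NRel E a₃ b₃) ∨
       (E a₁ b₁ ∧ NRel E a₂ b₂ ∧ E a₃ b₃) ∨
       (NRel E a₁ b₁ ∧ E a₂ b₂ ∧ E a₃ b₃)))

/-- A ternary operation hyperplanely has the binary behaviour `P`. -/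
def Hyperplanely (P : (A → A → A) → Prop) (f : A → A → A → A) : Prop :=
  ∀ c : A, P (fun x y => f x y c) ∧ P (fun x y => f x c y) ∧ P (fun x y => f c x y)

/-- `n_E(u,s)`: the number of coordinates at which `u` and `s` are `E`-related. -/
noncomputable def nECount {k : ℕ} (E : A → A → Prop) (u s : Fin k → A) : ℕ :=
  {i : Fin k | E (u i) (s i)}.ncard

/-- A constant tuple. -/
def IsConstTuple {k : ℕ} (u : Fin k → A) : Prop := ∃ c, ∀ i, u i = c

/-- `h` maps any argument containing an `N`-pair to an `N`-pair and behaves like a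
minority on `{E,=}`. -/
def HMinority (E : A → A → Prop) (h : A → A → A → A) : Prop :=
  (∀ a₁ a₂ a₃ b₁ b₂ b₃ : A,
    (NRel E a₁ b₁ ∨ NRel E a₂ b₂ ∨ NRel E a₃ b₃) →
      NRel E (h a₁ a₂ a₃) (h b₁ b₂ b₃)) ∧
  (∀ a₁ a₂ a₃ b₁ b₂ b₃ : A,
    uu E a₁ b₁ → uu E a₂ b₂ → uu E a₃ b₃ →
      (E (h a₁ a₂ a₃) (h b₁ b₂ b₃) ↔
        ((E a₁ b₁ ∧ E a₂ b₂ ∧ E a₃ b₃) ∨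
         (E a₁ b₁ ∧ ¬ E a₂ b₂ ∧ ¬ E a₃ b₃) ∨
         (¬ E a₁ b₁ ∧ E a₂ b₂ ∧ ¬ E a₃ b₃) ∨
         (¬ E a₁ b₁ ∧ ¬ E a₂ b₂ ∧ E a₃ b₃))))

/-- The vertex set of `C²_ω`, the disjoint union of ω edges. -/
abbrev Vtx : Type := ℕ × Bool

/-- The edge relation of `C²_ω`: `(n,b)` is adjacent to `(m,c)` iff `n = m` and `b ≠ c`. -/
def Ematch (a b : Vtx) : Prop := a.1 = b.1 ∧ a.2 ≠ b.2

/- ---------- Auxiliary material for the proof of stmt13 ---------- -/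

lemma xor_xor_left' (x y : Bool) : xor x (xor x y) = y := by
  cases x <;> cases y <;> rfl

lemma xor_not_xor' (x y : Bool) : xor (!x) (xor x y) = !y := by
  cases x <;> cases y <;> rfl

lemma Ematch_ne' {a b : Vtx} (h : Ematch a b) : a ≠ b := by
  rintro rfl; exact h.2 rfl

lemma NRel_fst' {a b : Vtx} (h : NRel Ematch a b) : a.1 ≠ b.1 := by
  intro hfst
  by_cases h2 : a.2 = b.2
  · exact h.1 (Prod.ext hfst h2)
  · exact h.2 ⟨hfst, h2⟩

/-- An automorphism of `C²_ω` from a permutation of `ℕ` and a family of flips. -/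
def mkAuto (σ : ℕ ≃ ℕ) (d : ℕ → Bool) : Vtx ≃ Vtx where
  toFun p := (σ p.1, xor p.2 (d p.1))
  invFun p := (σ.symm p.1, xor p.2 (d (σ.symm p.1)))
  left_inv := by rintro ⟨i, s⟩; simp [Bool.xor_assoc]
  right_inv := by rintro ⟨i, s⟩; simp [Bool.xor_assoc]

lemma mkAuto_isAuto (σ : ℕ ≃ ℕ) (d : ℕ → Bool) :
    IsGraphAuto Ematch (mkAuto σ d) := by
  intro a b
  simp only [mkAuto, Equiv.coe_fn_mk, Ematch]
  constructor
  · rintro ⟨h1, h2⟩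
    have hfst := σ.injective h1
    exact ⟨hfst, fun hb => h2 (by rw [hb, hfst])⟩
  · rintro ⟨h1, h2⟩
    refine ⟨by rw [h1], fun hx => h2 ?_⟩
    rw [h1] at hx
    revert hx
    cases hb : d b.1 <;> cases a.2 <;> cases b.2 <;> simp

lemma exists_perm' {n m : ℕ} (h : n ≠ m) : ∃ σ : ℕ ≃ ℕ, σ n = 0 ∧ σ m = 1 := by
  refine ⟨(Equiv.swap n 0).trans (Equiv.swap (Equiv.swap n 0 m) 1), ?_, ?_⟩
  · have h1 : Equiv.swap n 0 m ≠ 0 := by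
      intro he
      apply h
      have : Equiv.swap n 0 m = Equiv.swap n 0 n := by
        rw [he, Equiv.swap_apply_left]
      exact ((Equiv.swap n 0).injective this).symm
    simp only [Equiv.trans_apply, Equiv.swap_apply_left]
    exact Equiv.swap_apply_of_ne_of_ne (Ne.symm h1) (by norm_num)
  · simp only [Equiv.trans_apply, Equiv.swap_apply_left]

lemma copyMem {R : Set (Fin 4 → Vtx)} (hinv : AutoInvariant Ematch R)
    {u : Fin 4 → Vtx} (hu : u ∈ R)
    (h01 : (u 1).1 = (u 0).1) (h23 : (u 3).1 = (u 2).1) (hne : (u 2).1 ≠ (u 0).1)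
    (β γ : Bool) :
    (fun l : Fin 4 => ((if (l : ℕ) < 2 then 0 else 1 : ℕ),
      xor ((u l).2) (if (l : ℕ) < 2 then xor ((u 0).2) β else xor ((u 2).2) γ))) ∈ R := by
  obtain ⟨σ, hσ0, hσ2⟩ := exists_perm' (Ne.symm hne)
  set d : ℕ → Bool :=
    fun i => if i = (u 0).1 then xor ((u 0).2) β else xor ((u 2).2) γ with hd
  have hmem := hinv (mkAuto σ d) (mkAuto_isAuto σ d) u hu
  have heq : (fun i => (mkAuto σ d) (u i)) =
      (fun l : Fin 4 => ((if (l : ℕ) < 2 then 0 else 1 : ℕ),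
        xor ((u l).2) (if (l : ℕ) < 2 then xor ((u 0).2) β else xor ((u 2).2) γ))) := by
    have hne3 : (u 3).1 ≠ (u 0).1 := by rw [h23]; exact hne
    funext l
    fin_cases l <;>
      simp [mkAuto, hd, h01, h23, hσ0, hσ2, hne, hne3]
  rw [heq] at hmem
  exact hmem

/-- The canonical `EE`-tuple. -/
def tupE (β γ : Bool) : Fin 4 → Vtx := fun l =>
  if (l : ℕ) = 0 then (0, β) else if (l : ℕ) = 1 then (0, !β)
    else if (l : ℕ) = 2 then (1, γ) else (1, !γ)

/-- The canonical `==`-tuple. -/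
def tupQ (β γ : Bool) : Fin 4 → Vtx := fun l =>
  if (l : ℕ) < 2 then (0, β) else (1, γ)

@[simp] lemma tupE_app0 (β γ : Bool) : tupE β γ 0 = ((0 : ℕ), β) := rfl
@[simp] lemma tupE_app1 (β γ : Bool) : tupE β γ 1 = ((0 : ℕ), !β) := rfl
@[simp] lemma tupE_app2 (β γ : Bool) : tupE β γ 2 = ((1 : ℕ), γ) := rfl
@[simp] lemma tupE_app3 (β γ : Bool) : tupE β γ 3 = ((1 : ℕ), !γ) := rfl
@[simp] lemma tupQ_app0 (β γ : Bool) : tupQ β γ 0 = ((0 : ℕ), β) := rfl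
@[simp] lemma tupQ_app1 (β γ : Bool) : tupQ β γ 1 = ((0 : ℕ), β) := rfl
@[simp] lemma tupQ_app2 (β γ : Bool) : tupQ β γ 2 = ((1 : ℕ), γ) := rfl
@[simp] lemma tupQ_app3 (β γ : Bool) : tupQ β γ 3 = ((1 : ℕ), γ) := rfl

lemma tupE_mem {R : Set (Fin 4 → Vtx)} (hinv : AutoInvariant Ematch R)
    {t : Fin 4 → Vtx} (ht : t ∈ R) (hE01 : Ematch (t 0) (t 1))
    (hE23 : Ematch (t 2) (t 3)) (hN : NRel Ematch (t 1) (t 2))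
    (β γ : Bool) : tupE β γ ∈ R := by
  have h01 : (t 1).1 = (t 0).1 := hE01.1.symm
  have h23 : (t 3).1 = (t 2).1 := hE23.1.symm
  have hne : (t 2).1 ≠ (t 0).1 := fun he => NRel_fst' hN (h01.trans he.symm)
  have hb1 : (t 1).2 = !(t 0).2 := by
    have := hE01.2
    cases hx : (t 0).2 <;> cases hy : (t 1).2 <;> simp_all
  have hb3 : (t 3).2 = !(t 2).2 := by
    have := hE23.2
    cases hx : (t 2).2 <;> cases hy : (t 3).2 <;> simp_all
  have hmem := copyMem hinv ht h01 h23 hne β γ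
  have heq : tupE β γ =
      (fun l : Fin 4 => ((if (l : ℕ) < 2 then 0 else 1 : ℕ),
        xor ((t l).2) (if (l : ℕ) < 2 then xor ((t 0).2) β else xor ((t 2).2) γ))) := by
    funext l
    fin_cases l <;>
      simp [tupE, hb1, hb3, xor_xor_left', xor_not_xor']
  rw [heq]
  exact hmem

lemma tupQ_mem {R : Set (Fin 4 → Vtx)} (hinv : AutoInvariant Ematch R)
    {t : Fin 4 → Vtx} (ht : t ∈ R) (hQ01 : t 0 = t 1)
    (hQ23 : t 2 = t 3) (hN : NRel Ematch (t 1) (t 2))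
    (β γ : Bool) : tupQ β γ ∈ R := by
  have h01 : (t 1).1 = (t 0).1 := by rw [hQ01]
  have h23 : (t 3).1 = (t 2).1 := by rw [hQ23]
  have hne : (t 2).1 ≠ (t 0).1 := fun he => NRel_fst' hN (h01.trans he.symm)
  have hb1 : (t 1).2 = (t 0).2 := by rw [hQ01]
  have hb3 : (t 3).2 = (t 2).2 := by rw [hQ23]
  have hmem := copyMem hinv ht h01 h23 hne β γ
  have heq : tupQ β γ =
      (fun l : Fin 4 => ((if (l : ℕ) < 2 then 0 else 1 : ℕ),
        xor ((t l).2) (if (l : ℕ) < 2 then xor ((t 0).2) β else xor ((t 2).2) γ))) := by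
    funext l
    fin_cases l <;>
      simp [tupQ, hb1, hb3, xor_xor_left']
  rw [heq]
  exact hmem

/-- If a function on `Bool`-vectors distinguishes the two constants, it
distinguishes some pair at Hamming distance one. -/
lemma flip_exists {k : ℕ} (φ : (Fin k → Bool) → Vtx)
    (hne : φ (fun _ => false) ≠ φ (fun _ => true)) :
    ∃ (c : Fin k → Bool) (j : Fin k),
      φ c ≠ φ (Function.update c j (!(c j))) := by
  by_contra hcon
  push_neg at hcon
  have aux : ∀ s : Finset (Fin k), ∀ c : Fin k → Bool,
      (∀ i, c i = true → i ∈ s) → φ c = φ (fun _ => false) := by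
    intro s
    induction s using Finset.induction_on with
    | empty =>
      intro c hc
      have hcf : c = fun _ => false := by
        funext i
        cases hci : c i
        · rfl
        · exact absurd (hc i hci) (Finset.notMem_empty i)
      rw [hcf]
    | @insert a s ha ih =>
      intro c hc
      by_cases hca : c a = true
      · rw [hcon c a]
        apply ih
        intro i hi
        rcases eq_or_ne i a with rfl | hia
        · rw [Function.update_self, hca] at hi
          simp at hi
        · rw [Function.update_of_ne hia] at hi
          rcases Finset.mem_insert.1 (hc i hi) with hh | hh
          · exact absurd hh hia
          · exact hh
      · apply ih
        intro i hi
        rcases Finset.mem_insert.1 (hc i hi) with rfl | hh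
        · exact absurd hi hca
        · exact hh
  exact hne (aux Finset.univ (fun _ => true) (fun i _ => Finset.mem_univ i)).symm

theorem stmt13 {k : ℕ} (h : Vtx → Vtx → Vtx → Vtx) (hh : HMinority Ematch h)
    (f : (Fin k → Vtx) → Vtx) (hqnu : IsQnu f)
    (hfE : PreservesRel f Ematch) (hfN : PreservesRel f (NRel Ematch))
    (hfuuE : PreservesRel f (uu Ematch))
    (R : Set (Fin 4 → Vtx)) (hRh : Preserves3 h R) (hRf : Preserves f R)
    (hinv : AutoInvariant Ematch R)
    (hEE : ∃ t ∈ R, IsOP Ematch Ematch t ∧ NRel Ematch (t 1) (t 2))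
    (hEqEq : ∃ t' ∈ R, IsOP (fun a b : Vtx => a = b) (fun a b : Vtx => a = b) t' ∧
      NRel Ematch (t' 1) (t' 2)) :
    (∃ t ∈ R, IsOP Ematch (fun a b : Vtx => a = b) t) ∧
    (∃ t ∈ R, IsOP (fun a b : Vtx => a = b) Ematch t) := by
  obtain ⟨t, htR, ⟨hE01, hE23⟩, hN⟩ := hEE
  obtain ⟨t', ht'R, ⟨hQ01, hQ23⟩, hN'⟩ := hEqEq
  have htE : ∀ β γ : Bool, tupE β γ ∈ R :=
    fun β γ => tupE_mem hinv htR hE01 hE23 hN β γ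
  have htQ : ∀ β γ : Bool, tupQ β γ ∈ R :=
    fun β γ => tupQ_mem hinv ht'R hQ01 hQ23 hN' β γ
  constructor
  · -- E= tuple
    have hφne : f (fun _ : Fin k => ((0 : ℕ), false)) ≠
        f (fun _ : Fin k => ((0 : ℕ), true)) := by
      apply Ematch_ne'
      exact hfE _ _ (fun i => ⟨rfl, by simp⟩)
    obtain ⟨c, j, hcj⟩ :=
      flip_exists (fun c : Fin k → Bool => f (fun i => ((0 : ℕ), c i)))
        (by simpa using hφne)
    set T : Fin k → (Fin 4 → Vtx) :=
      fun i => if i = j then tupE (c j) false else tupQ (c i) false with hT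
    have hTR : ∀ i, T i ∈ R := by
      intro i
      by_cases hij : i = j
      · simp only [hT, if_pos hij]
        exact htE (c j) false
      · simp only [hT, if_neg hij]
        exact htQ (c i) false
    have hS := hRf T hTR
    refine ⟨_, hS, ?_, ?_⟩
    · -- Ematch (S 0) (S 1)
      have e0 : (fun i => T i 0) = (fun i => ((0 : ℕ), c i)) := by
        funext i
        by_cases hij : i = j <;> simp [hT, hij]
      have e1 : (fun i => T i 1) =
          (fun i => ((0 : ℕ), Function.update c j (!(c j)) i)) := by
        funext i
        by_cases hij : i = j
        · subst hij; simp [hT]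
        · simp [hT, hij, Function.update_of_ne hij]
      have huu : uu Ematch (f fun i => T i 0) (f fun i => T i 1) := by
        apply hfuuE
        intro i
        by_cases hij : i = j
        · subst hij
          left
          simp only [hT, if_pos rfl, tupE_app0, tupE_app1, tupE_app2, tupE_app3]
          exact ⟨rfl, by simp⟩
        · right
          simp [hT, hij]
      rcases huu with hEdge | hEq
      · exact hEdge
      · rw [e0, e1] at hEq
        exact absurd hEq hcj
    · -- (S 2) = (S 3)
      have e2 : (fun i => T i 2) = (fun _ => ((1 : ℕ), false)) := by
        funext i
        by_cases hij : i = j <;> simp [hT, hij]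
      have e3 : (fun i => T i 3) =
          Function.update (fun _ => ((1 : ℕ), false)) j ((1 : ℕ), true) := by
        funext i
        by_cases hij : i = j
        · subst hij; simp [hT]
        · simp [hT, hij, Function.update_of_ne hij]
      show f (fun i => T i 2) = f (fun i => T i 3)
      rw [e2, e3]
      exact (hqnu ((1 : ℕ), false) ((1 : ℕ), true) j).symm
  · -- =E tuple
    have hψne : f (fun _ : Fin k => ((1 : ℕ), false)) ≠
        f (fun _ : Fin k => ((1 : ℕ), true)) := by
      apply Ematch_ne'
      exact hfE _ _ (fun i => ⟨rfl, by simp⟩)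
    obtain ⟨c, j, hcj⟩ :=
      flip_exists (fun c : Fin k → Bool => f (fun i => ((1 : ℕ), c i)))
        (by simpa using hψne)
    set T : Fin k → (Fin 4 → Vtx) :=
      fun i => if i = j then tupE false (c j) else tupQ false (c i) with hT
    have hTR : ∀ i, T i ∈ R := by
      intro i
      by_cases hij : i = j
      · simp only [hT, if_pos hij]
        exact htE false (c j)
      · simp only [hT, if_neg hij]
        exact htQ false (c i)
    have hS := hRf T hTR
    refine ⟨_, hS, ?_, ?_⟩
    · -- (S 0) = (S 1)
      have e0 : (fun i => T i 0) = (fun _ => ((0 : ℕ), false)) := by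
        funext i
        by_cases hij : i = j <;> simp [hT, hij]
      have e1 : (fun i => T i 1) =
          Function.update (fun _ => ((0 : ℕ), false)) j ((0 : ℕ), true) := by
        funext i
        by_cases hij : i = j
        · subst hij; simp [hT]
        · simp [hT, hij, Function.update_of_ne hij]
      show f (fun i => T i 0) = f (fun i => T i 1)
      rw [e0, e1]
      exact (hqnu ((0 : ℕ), false) ((0 : ℕ), true) j).symm
    · -- Ematch (S 2) (S 3)
      have e2 : (fun i => T i 2) = (fun i => ((1 : ℕ), c i)) := by
        funext i
        by_cases hij : i = j <;> simp [hT, hij]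
      have e3 : (fun i => T i 3) =
          (fun i => ((1 : ℕ), Function.update c j (!(c j)) i)) := by
        funext i
        by_cases hij : i = j
        · subst hij; simp [hT]
        · simp [hT, hij, Function.update_of_ne hij]
      have huu : uu Ematch (f fun i => T i 2) (f fun i => T i 3) := by
        apply hfuuE
        intro i
        by_cases hij : i = j
        · subst hij
          left
          simp only [hT, if_pos rfl, tupE_app0, tupE_app1, tupE_app2, tupE_app3]
          exact ⟨rfl, by simp⟩
        · right
          simp [hT, hij]
      rcases huu with hEdge | hEq
      · exact hEdge
      · rw [e2, e3] at hEq
        exact absurd hEq hcj
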